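/- Let λ ∈ ℝ with λ ≠ 0. Then the stabilizer {U ∈ SU(5) : Uᵀ σ(λ, 0) U = σ(λ, 0)} consists exactly of the block-diagonal matrices diag(A, B) with A ∈ SU(2) and B ∈ SU(3), i.e. matrices U with U_{ij} = A_{ij} for i, j ∈ {1, 2}, U_{ij} = B_{i−2, j−2} for i, j ∈ {3, 4, 5}, and all other entries zero; hence the stabilizer of σ(λ, 0) in SU(5) is isomorphic to SU(2) × SU(3). -/

import Mathlib

/-!
For unitary `U` the inverse of `Uᵀ` is the entrywise conjugate `Ū`, so `Uᵀ σ U = σ` becomes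
`σ U = Ū σ`. Up to reordering the basis, `σ(λ, 0)` is an invertible `2 × 2` block `K` padded
with zeros, and comparing the off-diagonal blocks of `σ U = Ū σ` forces `U = diag(A, B)`.
For `2 × 2` matrices `Aᵀ K A = det A • K`, so the stabilizer condition on the first block is
`det A = 1`, and then `det B = det U = 1`.
-/

noncomputable section

open Matrix

/-- The antisymmetric `5×5` matrix `σ(λ, μ)` representing the 2-form
`λ e¹∧e² + μ e³∧e⁴` on `ℂ⁵`. -/
def sigmaForm (lam mu : ℝ) : Matrix (Fin 5) (Fin 5) ℂ :=
  (lam : ℂ) • (Matrix.single 0 1 1 - Matrix.single 1 0 1) +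
    (mu : ℂ) • (Matrix.single 2 3 1 - Matrix.single 3 2 1)

/-- The block-diagonal matrix `diag(A, B)` with `A` of size `2×2` and `B` of size `3×3`. -/
def blockDiag23 (A : Matrix (Fin 2) (Fin 2) ℂ) (B : Matrix (Fin 3) (Fin 3) ℂ) :
    Matrix (Fin 5) (Fin 5) ℂ := fun i j =>
  if hi : (i : ℕ) < 2 then
    (if hj : (j : ℕ) < 2 then A ⟨(i : ℕ), hi⟩ ⟨(j : ℕ), hj⟩ else 0)
  else if hj : (j : ℕ) < 2 then 0
  else B ⟨(i : ℕ) - 2, by have := i.isLt; omega⟩ ⟨(j : ℕ) - 2, by have := j.isLt; omega⟩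

namespace Matrix

variable {l m n R : Type*} [Fintype l] [Fintype m] [Fintype n]

section CommRing

variable [CommRing R]

section Reindex

variable [DecidableEq l] [DecidableEq m] (e : m ≃ l)

lemma reindex_mul_reindex (A B : Matrix m m R) :
    reindex e e A * reindex e e B = reindex e e (A * B) :=
  (map_mul (reindexAlgEquiv R R e) A B).symm

lemma transpose_reindex_mul_mul_reindex (U σ : Matrix m m R) :
    (reindex e e U)ᵀ * reindex e e σ * reindex e e U = reindex e e (Uᵀ * σ * U) := by
  rw [transpose_reindex, reindex_mul_reindex, reindex_mul_reindex]

variable [StarRing R]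

lemma reindex_mem_unitaryGroup_iff {U : Matrix m m R} :
    reindex e e U ∈ unitaryGroup l R ↔ U ∈ unitaryGroup m R := by
  rw [mem_unitaryGroup_iff, mem_unitaryGroup_iff, star_eq_conjTranspose, star_eq_conjTranspose,
    conjTranspose_reindex, reindex_mul_reindex, ← map_one (reindexAlgEquiv R R e),
    coe_reindexAlgEquiv, (reindex e e).injective.eq_iff]

lemma reindex_mem_specialUnitaryGroup_iff {U : Matrix m m R} :
    reindex e e U ∈ specialUnitaryGroup l R ↔ U ∈ specialUnitaryGroup m R := by
  rw [mem_specialUnitaryGroup_iff, mem_specialUnitaryGroup_iff, det_reindex_self,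
    reindex_mem_unitaryGroup_iff]

end Reindex

lemma transpose_fromBlocks_diag_mul_mul (P K : Matrix m m R) (S : Matrix n n R) :
    (fromBlocks P 0 0 S)ᵀ * fromBlocks K 0 0 0 * fromBlocks P 0 0 S =
      fromBlocks (Pᵀ * K * P) 0 0 0 := by
  simp [fromBlocks_transpose, fromBlocks_multiply]

section Unitary

variable [StarRing R]

lemma fromBlocks_diag_mem_unitaryGroup_iff [DecidableEq m] [DecidableEq n]
    {P : Matrix m m R} {S : Matrix n n R} :
    fromBlocks P 0 0 S ∈ unitaryGroup (m ⊕ n) R ↔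
      P ∈ unitaryGroup m R ∧ S ∈ unitaryGroup n R := by
  simp only [mem_unitaryGroup_iff, star_eq_conjTranspose, fromBlocks_conjTranspose,
    fromBlocks_multiply, ← fromBlocks_one, fromBlocks_inj]
  simp

lemma mul_eq_map_star_mul_of_transpose_mul_mul_eq [DecidableEq n] {U σ : Matrix n n R}
    (hU : U ∈ unitaryGroup n R) (h : Uᵀ * σ * U = σ) : σ * U = U.map star * σ := by
  have hinv : U.map star * Uᵀ = 1 := by
    simpa [transpose_mul, star_eq_conjTranspose, conjTranspose, transpose_map] using
      congrArg transpose (mem_unitaryGroup_iff.1 hU)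
  calc σ * U = U.map star * Uᵀ * (σ * U) := by rw [hinv, Matrix.one_mul]
    _ = U.map star * (Uᵀ * σ * U) := by simp only [Matrix.mul_assoc]
    _ = U.map star * σ := by rw [h]

lemma eq_fromBlocks_diag_of_mul_eq_map_star_mul [DecidableEq m] {K : Matrix m m R}
    (hK : IsUnit K) {V : Matrix (m ⊕ n) (m ⊕ n) R}
    (h : fromBlocks K 0 0 0 * V = V.map star * fromBlocks K 0 0 0) :
    V = fromBlocks V.toBlocks₁₁ 0 0 V.toBlocks₂₂ := by
  rw [← fromBlocks_toBlocks V, fromBlocks_map, fromBlocks_multiply, fromBlocks_multiply,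
    fromBlocks_inj] at h
  obtain ⟨-, hQ, hR, -⟩ := h
  simp only [Matrix.zero_mul, Matrix.mul_zero, add_zero] at hQ hR
  have := hK.invertible
  have hQ0 : V.toBlocks₁₂ = 0 := (mul_right_inj_of_invertible K).1 (by rw [hQ, Matrix.mul_zero])
  have hR0 : V.toBlocks₂₁ = 0 := by
    have hR' : V.toBlocks₂₁.map star = 0 :=
      (mul_left_inj_of_invertible K).1 (by rw [← hR, Matrix.zero_mul])
    ext i j
    simpa using congr($hR' i j)
  conv_lhs => rw [← fromBlocks_toBlocks V, hQ0, hR0]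

theorem stabilizer_fromBlocks_iff [DecidableEq m] [DecidableEq n] {K : Matrix m m R}
    (hK : IsUnit K) (V : Matrix (m ⊕ n) (m ⊕ n) R) :
    V ∈ unitaryGroup (m ⊕ n) R ∧ Vᵀ * fromBlocks K 0 0 0 * V = fromBlocks K 0 0 0 ↔
      ∃ P S, (P ∈ unitaryGroup m R ∧ Pᵀ * K * P = K) ∧ S ∈ unitaryGroup n R ∧
        V = fromBlocks P 0 0 S := by
  constructor
  · rintro ⟨hV, hσ⟩
    have hV_diag := eq_fromBlocks_diag_of_mul_eq_map_star_mul hK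
      (mul_eq_map_star_mul_of_transpose_mul_mul_eq hV hσ)
    rw [hV_diag, fromBlocks_diag_mem_unitaryGroup_iff] at hV
    rw [hV_diag, transpose_fromBlocks_diag_mul_mul, fromBlocks_inj] at hσ
    exact ⟨_, _, ⟨hV.1, hσ.1⟩, hV.2, hV_diag⟩
  · rintro ⟨P, S, ⟨hP, hPK⟩, hS, rfl⟩
    rw [fromBlocks_diag_mem_unitaryGroup_iff, transpose_fromBlocks_diag_mul_mul, hPK]
    exact ⟨⟨hP, hS⟩, rfl⟩

end Unitary

lemma transpose_mul_skew_mul_fin_two (P : Matrix (Fin 2) (Fin 2) R) (a : R) :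
    Pᵀ * !![0, a; -a, 0] * P = P.det • !![0, a; -a, 0] := by
  ext i j
  fin_cases i <;> fin_cases j <;> simp [det_fin_two, Matrix.mul_apply, Fin.sum_univ_two] <;> ring

lemma transpose_mul_skew_mul_eq_self_iff [IsDomain R] {a : R} (ha : a ≠ 0)
    (P : Matrix (Fin 2) (Fin 2) R) :
    Pᵀ * !![0, a; -a, 0] * P = !![0, a; -a, 0] ↔ P.det = 1 := by
  rw [transpose_mul_skew_mul_fin_two]
  refine ⟨fun h => ?_, fun h => by rw [h, one_smul]⟩
  have h01 : P.det * a = 1 * a := by simpa using congr($h 0 1)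
  exact mul_right_cancel₀ ha h01

end CommRing

theorem stabilizer_fromBlocks_skew_iff [DecidableEq n] [Field R] [StarRing R] {a : R} (ha : a ≠ 0) (V : Matrix (Fin 2 ⊕ n) (Fin 2 ⊕ n) R) :
    V ∈ specialUnitaryGroup (Fin 2 ⊕ n) R ∧
        Vᵀ * fromBlocks !![0, a; -a, 0] 0 0 0 * V = fromBlocks !![0, a; -a, 0] 0 0 0 ↔
      ∃ A ∈ specialUnitaryGroup (Fin 2) R, ∃ B ∈ specialUnitaryGroup n R,
        V = fromBlocks A 0 0 B := by
  have hK : IsUnit !![0, a; -a, 0] := by simp [isUnit_iff_isUnit_det, ha]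
  simp only [mem_specialUnitaryGroup_iff]
  constructor
  · rintro ⟨⟨hV, hdet⟩, hσ⟩
    obtain ⟨P, S, ⟨hP, hPK⟩, hS, rfl⟩ := (stabilizer_fromBlocks_iff hK V).1 ⟨hV, hσ⟩
    rw [transpose_mul_skew_mul_eq_self_iff ha] at hPK
    rw [det_fromBlocks_zero₂₁, hPK, one_mul] at hdet
    exact ⟨P, ⟨hP, hPK⟩, S, ⟨hS, hdet⟩, rfl⟩
  · rintro ⟨P, ⟨hP, hPdet⟩, S, ⟨hS, hSdet⟩, rfl⟩
    obtain ⟨hV, hσ⟩ := (stabilizer_fromBlocks_iff hK _).2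
      ⟨P, S, ⟨hP, (transpose_mul_skew_mul_eq_self_iff ha P).2 hPdet⟩, hS, rfl⟩
    exact ⟨⟨hV, by rw [det_fromBlocks_zero₂₁, hPdet, hSdet, one_mul]⟩, hσ⟩

end Matrix

abbrev finSumFinEquiv23 : Fin 2 ⊕ Fin 3 ≃ Fin 5 := finSumFinEquiv

lemma blockDiag23_eq_reindex (A : Matrix (Fin 2) (Fin 2) ℂ) (B : Matrix (Fin 3) (Fin 3) ℂ) :
    blockDiag23 A B = reindex finSumFinEquiv23 finSumFinEquiv23 (fromBlocks A 0 0 B) := by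
  ext i j
  fin_cases i <;> fin_cases j <;> rfl

lemma sigmaForm_zero_eq_reindex (lam : ℝ) :
    sigmaForm lam 0 = reindex finSumFinEquiv23 finSumFinEquiv23
      (fromBlocks !![0, (lam : ℂ); -lam, 0] 0 0 0) := by
  ext i j
  fin_cases i <;> fin_cases j <;> simp [sigmaForm, single] <;> rfl

/-- for `λ ≠ 0`, the stabilizer of `σ(λ, 0)` in `SU(5)` under the congruence
action consists exactly of the block-diagonal matrices `diag(A, B)` with `A ∈ SU(2)` and
`B ∈ SU(3)`. -/
theorem stabilizer_sigma_su2_su3 (lam : ℝ) (hlam : lam ≠ 0) :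
    ∀ U : Matrix (Fin 5) (Fin 5) ℂ,
      (U ∈ Matrix.specialUnitaryGroup (Fin 5) ℂ ∧
          Uᵀ * sigmaForm lam 0 * U = sigmaForm lam 0) ↔
        ∃ A ∈ Matrix.specialUnitaryGroup (Fin 2) ℂ,
          ∃ B ∈ Matrix.specialUnitaryGroup (Fin 3) ℂ, U = blockDiag23 A B := by
  intro U
  obtain ⟨V, rfl⟩ : ∃ V, U = reindex finSumFinEquiv23 finSumFinEquiv23 V :=
    ⟨_, ((reindex finSumFinEquiv23 finSumFinEquiv23).apply_symm_apply U).symm⟩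
  simp only [sigmaForm_zero_eq_reindex, blockDiag23_eq_reindex, transpose_reindex_mul_mul_reindex,
    reindex_mem_specialUnitaryGroup_iff, (reindex _ _).injective.eq_iff]
  exact stabilizer_fromBlocks_skew_iff (Complex.ofReal_ne_zero.2 hlam) V
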